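/- Let A be a non-Boolean rank-ℓ arrangement of n hyperplanes and suppose the bigraded Hilbert series of S/I(A) has the partial-fraction form h(S/I; t, u) = Σ_{i=1}^{ℓ} t_{i0} / ((1−t)^i (1−u)^{n−i}) + lower-order terms (pole order < n). Then the power series F(s,t) = (1 − t + st(1−t))^n · h(S/I; t, t − st(1−t)) is a polynomial in s and t, and F(s, 1) = (−1)^ℓ χ(A, −s). -/

import Mathlib

/- STATEMENT 14: let A be a non-Boolean rank-ℓ arrangement of n hyperplanes and
suppose the bigraded Hilbert series of S/I(A) has the partial-fraction form
  h(S/I; t,u) = Σ_{i=1}^{ℓ} t_{i0}/((1−t)^i (1−u)^{n−i}) + (pole order < n).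
Then F(s,t) = (1 − t + st(1−t))^n · h(S/I; t, t − st(1−t)) is a polynomial in
s, t and F(s,1) = (−1)^ℓ χ(A, −s).

Formalization: we clear the common denominator (1−t)^n(1−u)^n; the hypothesis
says the numerator N (so h(S/I;t,u) = N/((1−t)^n(1−u)^n)) has the form
  N = Σ_{i=1}^ℓ t_{i0}(1−t)^{n−i}(1−u)^i + Σ_{i+j≤n−1} c_{ij}(1−t)^{n−i}(1−u)^{n−j}.
Under u ↦ t − st(1−t) one has 1−u ↦ (1−t)(1+st), and F = N∘sub/(1−t)^n; the
conclusion is that (1−t)^n divides N∘sub, with quotient F satisfying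
F(s,1) = (−1)^ℓ χ(A,−s).  In the hypothesis `X 0 = t, X 1 = u`; in the
conclusion `X 0 = s, X 1 = t`. -/

open MvPolynomial

variable {V : Type*} [AddCommGroup V] [Module ℂ V] [FiniteDimensional ℂ V]

/-- rank of a set of subspaces: codimension of its intersection. -/
noncomputable def rk (S : Finset (Submodule ℂ V)) : ℕ :=
  Module.finrank ℂ V - Module.finrank ℂ (S.inf id : Submodule ℂ V)

/-- Characteristic polynomial (Whitney rank-sum formula). -/
noncomputable def charPolyA (A : Finset (Submodule ℂ V)) : Polynomial ℤ :=
  ∑ S ∈ A.powerset, (-1 : Polynomial ℤ) ^ S.card * Polynomial.X ^ (rk A - rk S)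

/-- Tutte polynomial of the arrangement, `x = X 0`, `y = X 1`. -/
noncomputable def tutteA (A : Finset (Submodule ℂ V)) : MvPolynomial (Fin 2) ℤ :=
  ∑ S ∈ A.powerset, (X 0 - 1) ^ (rk A - rk S) * (X 1 - 1) ^ (S.card - rk S)

/-- The substitution `t ↦ t`, `u ↦ t − st(1−t)` (input vars `(t,u)`, output
vars `(s,t) = (X 0, X 1)`). -/
noncomputable def sub14 : MvPolynomial (Fin 2) ℚ →ₐ[ℚ] MvPolynomial (Fin 2) ℚ :=
  aeval (fun j : Fin 2 => if j = 0 then X 1 else X 1 - X 0 * X 1 * (1 - X 1))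


/-! Under the substitution, `1 − u ↦ (1 − t)(1 + st)`, so a term `c (1−t)^(n−i) (1−u)^(n−j)` of
the numerator becomes `(1−t)^n · (1−t)^(n−i−j) (1+st)^(n−j)`: it is divisible by `(1−t)^n`, and
for a pole of order `i + j < n` the quotient keeps a factor `1 − t`, so it vanishes at `t = 1`.
The leading terms leave `Σ_{i ≥ 1} t_{i0} (1+s)^i = T_A(1+s, 0)`, because `T_A` has degree `≤ ℓ`
in `x` and `t_{00} = T_A(0,0) = (−1)^ℓ χ(A,1) = 0`. Finally `T_A(1+s, 0) = (−1)^ℓ χ(A,−s)`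
termwise in the two rank-sum expansions, the signs matching because `rk S ≤ |S|` for a set of
hyperplanes. -/

open Finset

theorem finrank_le_card_add_finrank_inf {K W : Type*} [Field K] [AddCommGroup W] [Module K W]
    [FiniteDimensional K W] {S : Finset (Submodule K W)}
    (hS : ∀ H ∈ S, Module.finrank K H + 1 = Module.finrank K W) :
    Module.finrank K W ≤ #S + Module.finrank K (S.inf id : Submodule K W) := by
  classical
  induction S using Finset.induction_on with
  | empty => rw [inf_empty, finrank_top, card_empty, zero_add]
  | insert H S hH ih =>
    have hmod := Submodule.finrank_sup_add_finrank_inf_eq H (S.inf id)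
    have hsup := Submodule.finrank_le (H ⊔ S.inf id)
    have hHyp := hS H (mem_insert_self H S)
    have hind := ih fun H' h => hS H' (mem_insert_of_mem h)
    rw [inf_insert, card_insert_of_notMem hH, id]
    omega

theorem rk_mono {S T : Finset (Submodule ℂ V)} (h : S ⊆ T) : rk S ≤ rk T :=
  Nat.sub_le_sub_left (Submodule.finrank_mono (inf_mono h)) _

theorem rk_le_card {S : Finset (Submodule ℂ V)}
    (hS : ∀ H ∈ S, Module.finrank ℂ H + 1 = Module.finrank ℂ V) : rk S ≤ #S := by
  have := finrank_le_card_add_finrank_inf hS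
  unfold rk
  omega

theorem neg_one_pow_sub_eq {R : Type*} [CommRing R] {a b c : ℕ} (ha : c ≤ a) (hb : c ≤ b) :
    (-1 : R) ^ (b - c) = (-1) ^ a * (-1) ^ b * (-1) ^ (a - c) := by
  rw [← pow_add, ← pow_add]
  exact neg_one_pow_congr (by simp only [Nat.even_iff]; omega)

theorem map_tutteA {V R : Type*} [AddCommGroup V] [Module ℂ V] [CommRing R]
    (A : Finset (Submodule ℂ V)) :
    map (Int.castRingHom R) (tutteA A) =
      ∑ S ∈ A.powerset, (X 0 - 1) ^ (rk A - rk S) * (X 1 - 1) ^ (#S - rk S) := by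
  simp [tutteA, map_sum]

theorem eval_map_tutteA_cons_zero {R : Type*} [CommRing R] {A : Finset (Submodule ℂ V)}
    (hA : ∀ H ∈ A, Module.finrank ℂ H + 1 = Module.finrank ℂ V) (s : R) :
    eval (Fin.cons (1 + s) 0) (map (Int.castRingHom R) (tutteA A)) =
      (-1) ^ rk A * Polynomial.aeval (-s) (charPolyA A) := by
  rw [map_tutteA, map_sum, charPolyA, map_sum, mul_sum]
  refine sum_congr rfl fun S hS => ?_
  have hSA := mem_powerset.mp hS
  simp only [map_mul, map_pow, map_sub, map_neg, map_one, eval_X, Polynomial.aeval_X,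
    Fin.cons_zero, Fin.cons_one, Pi.zero_apply, add_sub_cancel_left, zero_sub, neg_pow s]
  rw [neg_one_pow_sub_eq (rk_mono hSA) (rk_le_card fun H h => hA H (hSA h))]
  ring

theorem eval_one_charPolyA {V : Type*} [AddCommGroup V] [Module ℂ V]
    {A : Finset (Submodule ℂ V)} (hA : A.Nonempty) :
    (charPolyA A).eval 1 = 0 := by
  simpa [charPolyA, Polynomial.eval_finsetSum] using sum_powerset_neg_one_pow_card_of_nonempty hA

theorem coeff_zero_tutteA {A : Finset (Submodule ℂ V)}
    (hA : ∀ H ∈ A, Module.finrank ℂ H + 1 = Module.finrank ℂ V) (hne : A.Nonempty) :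
    coeff 0 (tutteA A) = 0 := by
  have h := eval_map_tutteA_cons_zero hA (-1 : ℤ)
  rw [add_neg_cancel, neg_neg, Polynomial.coe_aeval_eq_eval, eval_one_charPolyA hne, mul_zero] at h
  have hcons : (Fin.cons 0 0 : Fin 2 → ℤ) = 0 := by
    ext i
    fin_cases i <;> rfl
  simpa [hcons, constantCoeff_eq] using h

theorem eval_cons_zero_eq_sum_range {R : Type*} [CommRing R] {n : ℕ}
    (P : MvPolynomial (Fin (n + 1)) R) {D : ℕ} (hD : degreeOf 0 P < D) (x : R) :
    eval (Fin.cons x 0) P = ∑ i ∈ range D, coeff (Finsupp.single 0 i) P * x ^ i := by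
  rw [eval_eq_eval_mv_eval', Polynomial.eval_eq_sum_range'
    (Polynomial.natDegree_map_le.trans_lt ((natDegree_finSuccEquiv P).trans_lt hD))]
  refine sum_congr rfl fun i _ => ?_
  rw [Polynomial.coeff_map, MvPolynomial.eval_zero, constantCoeff_eq, finSuccEquiv_coeff_coeff,
    Finsupp.cons_zero_eq_single_zero]

theorem degreeOf_zero_tutteA_le {V R : Type*} [AddCommGroup V] [Module ℂ V] [CommRing R]
    [Nontrivial R] (A : Finset (Submodule ℂ V)) :
    degreeOf 0 (map (Int.castRingHom R) (tutteA A)) ≤ rk A := by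
  rw [map_tutteA]
  refine (degreeOf_sum_le _ _ _).trans (Finset.sup_le fun S _ => ?_)
  have hX0 : degreeOf 0 (X 0 - 1 : MvPolynomial (Fin 2) R) ≤ 1 :=
    (degreeOf_sub_le _ _ _).trans (by simp)
  have hX1 : degreeOf 0 (X 1 - 1 : MvPolynomial (Fin 2) R) ≤ 0 :=
    (degreeOf_sub_le _ _ _).trans (by simp [degreeOf_X_of_ne])
  calc _ ≤ (rk A - rk S) * degreeOf 0 (X 0 - 1 : MvPolynomial (Fin 2) R) +
        (#S - rk S) * degreeOf 0 (X 1 - 1 : MvPolynomial (Fin 2) R) :=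
        (degreeOf_mul_le _ _ _).trans (add_le_add (degreeOf_pow_le _ _ _) (degreeOf_pow_le _ _ _))
    _ ≤ (rk A - rk S) * 1 + (#S - rk S) * 0 := by gcongr
    _ ≤ rk A := by omega

theorem sub14_C (q : ℚ) : sub14 (C q) = C q := by
  simp [sub14, algebraMap_eq]

theorem sub14_one_sub_pow_mul_one_sub_pow (a b : ℕ) :
    sub14 ((1 - X 0) ^ a * (1 - X 1) ^ b) = (1 - X 1) ^ (a + b) * (1 + X 0 * X 1) ^ b := by
  simp only [sub14, map_mul, map_pow, map_sub, map_one, aeval_X, Fin.isValue, ↓reduceIte,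
    one_ne_zero]
  rw [show (1 : MvPolynomial (Fin 2) ℚ) - (X 1 - X 0 * X 1 * (1 - X 1)) =
    (1 - X 1) * (1 + X 0 * X 1) by ring, mul_pow, pow_add, mul_assoc]

theorem sum_Icc_coeff_tutteA_mul_pow {R : Type*} [CommRing R] [Nontrivial R]
    {A : Finset (Submodule ℂ V)}
    (hA : ∀ H ∈ A, Module.finrank ℂ H + 1 = Module.finrank ℂ V) (hne : A.Nonempty) (x : R) :
    ∑ i ∈ Icc 1 (rk A), ((coeff (Finsupp.single 0 i) (tutteA A) : ℤ) : R) * x ^ i =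
      eval (Fin.cons x 0) (map (Int.castRingHom R) (tutteA A)) := by
  rw [eval_cons_zero_eq_sum_range _ (Nat.lt_succ_of_le (degreeOf_zero_tutteA_le A)),
    range_eq_Ico, sum_eq_sum_Ico_succ_bot (Nat.succ_pos _), zero_add, Nat.succ_eq_add_one,
    Ico_add_one_right_eq_Icc]
  simp [coeff_map, coeff_zero_tutteA hA hne]

theorem specialization_charPoly_general (A : Finset (Submodule ℂ V))
    (hA : ∀ H ∈ A, Module.finrank ℂ H + 1 = Module.finrank ℂ V)
    (hnonBoolean : rk A < A.card)
    -- the numerator of h(S/I;t,u) over the denominator (1−t)^n(1−u)^n: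
    (N : MvPolynomial (Fin 2) ℚ)
    -- hypothesis: partial fraction form with leading Tutte part and pole order < n tail
    (c : ℕ × ℕ → MvPolynomial (Fin 2) ℚ)
    (hN : N =
      (∑ i ∈ Finset.Icc 1 (rk A),
        C ((MvPolynomial.coeff (Finsupp.single 0 i) (tutteA A) : ℤ) : ℚ) *
          (1 - X 0) ^ (A.card - i) * (1 - X 1) ^ i) +
      ∑ ij ∈ (Finset.range A.card ×ˢ Finset.range A.card).filter
          (fun ij => ij.1 + ij.2 ≤ A.card - 1),
        c ij * (1 - X 0) ^ (A.card - ij.1) * (1 - X 1) ^ (A.card - ij.2)) :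
    -- conclusion: F(s,t) is a polynomial and F(s,1) = (−1)^ℓ χ(A,−s)
    ∃ F : MvPolynomial (Fin 2) ℚ,
      sub14 N = (1 - X 1) ^ A.card * F ∧
      ∀ s : ℚ,
        MvPolynomial.eval (fun j : Fin 2 => if j = 0 then s else 1) F =
          (-1) ^ (rk A) * Polynomial.aeval (-s) (charPolyA A) := by
  have hne : A.Nonempty := card_pos.mp (by omega)
  refine ⟨(∑ i ∈ Icc 1 (rk A),
      C ((coeff (Finsupp.single 0 i) (tutteA A) : ℤ) : ℚ) * (1 + X 0 * X 1) ^ i) +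
    ∑ ij ∈ (range #A ×ˢ range #A).filter (fun ij => ij.1 + ij.2 ≤ #A - 1),
      sub14 (c ij) * (1 - X 1) ^ (#A - ij.1 - ij.2) * (1 + X 0 * X 1) ^ (#A - ij.2),
    ?_, fun s => ?_⟩
  · rw [hN, map_add, map_sum, map_sum, mul_add, mul_sum, mul_sum]
    congr 1 <;> refine sum_congr rfl fun i hi => ?_
    · have hiA : i ≤ #A := (mem_Icc.mp hi).2.trans hnonBoolean.le
      rw [mul_assoc, map_mul, sub14_C, sub14_one_sub_pow_mul_one_sub_pow,
        Nat.sub_add_cancel hiA]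
      ring
    · simp only [mem_filter, mem_product, mem_range] at hi
      rw [mul_assoc, map_mul, sub14_one_sub_pow_mul_one_sub_pow,
        show #A - i.1 + (#A - i.2) = #A + (#A - i.1 - i.2) by omega, pow_add]
      ring
  · have hvanish :
        eval (fun j => if j = 0 then s else 1) (1 - X 1 : MvPolynomial (Fin 2) ℚ) = 0 := by
      simp
    rw [map_add, add_eq_left.mpr ?tail]
    case tail =>
      rw [map_sum]
      refine sum_eq_zero fun ij hij => ?_
      simp only [mem_filter, mem_product, mem_range] at hij
      rw [map_mul, map_mul, map_pow, hvanish, zero_pow (by omega), mul_zero, zero_mul]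
    simp only [map_sum, map_mul, map_pow, map_add, map_one, eval_C, eval_X, Fin.isValue,
      ↓reduceIte, one_ne_zero, mul_one]
    rw [sum_Icc_coeff_tutteA_mul_pow hA hne, eval_map_tutteA_cons_zero hA]

theorem specialization_charPoly (A : Finset (Submodule ℂ V))
    (hA : ∀ H ∈ A, Module.finrank ℂ H + 1 = Module.finrank ℂ V)
    (hess : rk A = Module.finrank ℂ V)
    (hnonBoolean : rk A < A.card)
    -- the numerator of h(S/I;t,u) over the denominator (1−t)^n(1−u)^n:
    (N : MvPolynomial (Fin 2) ℚ)
    -- hypothesis: partial fraction form with leading Tutte part and pole order < n tail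
    (c : ℕ × ℕ → MvPolynomial (Fin 2) ℚ)
    (hN : N =
      (∑ i ∈ Finset.Icc 1 (rk A),
        C ((MvPolynomial.coeff (Finsupp.single 0 i) (tutteA A) : ℤ) : ℚ) *
          (1 - X 0) ^ (A.card - i) * (1 - X 1) ^ i) +
      ∑ ij ∈ (Finset.range A.card ×ˢ Finset.range A.card).filter
          (fun ij => ij.1 + ij.2 ≤ A.card - 1),
        c ij * (1 - X 0) ^ (A.card - ij.1) * (1 - X 1) ^ (A.card - ij.2)) :
    -- conclusion: F(s,t) is a polynomial and F(s,1) = (−1)^ℓ χ(A,−s)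
    ∃ F : MvPolynomial (Fin 2) ℚ,
      sub14 N = (1 - X 1) ^ A.card * F ∧
      ∀ s : ℚ,
        MvPolynomial.eval (fun j : Fin 2 => if j = 0 then s else 1) F =
          (-1) ^ (rk A) * Polynomial.aeval (-s) (charPolyA A) :=
  specialization_charPoly_general A hA hnonBoolean N c hN
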